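/- arXiv:1606.05700 — 4 statements merged into one kernel-verified Lean document; each statement's English description precedes it below -/
import Mathlib

section
/- For every integer n ≥ 1, (1/π) · ∫₀^∞ (2(1 − cos s)/s²)ⁿ ds ≤ √(3/(πn)) + 2/((2n−1)·π^{2n}). -/
/-!
Since `2 (1 - cos s) / s² = (sin (s/2) / (s/2))²`, the bound `sin x ≤ x e^{-x²/6}` on `[0, π]`
gives the Gaussian majorant `e^{-s²/12}` on `(0, 2π]`, whose `n`-th power integrates over `(0, ∞)`
to `√(3π/n)`. On `(2π, ∞)` the crude bound `4 / s²` contributes `4ⁿ (2π)^{1-2n} / (2n-1)`.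
-/

open MeasureTheory Real Set

lemma le_of_deriv_le_of_nonneg {f g : ℝ → ℝ} (hf : Differentiable ℝ f) (hg : Differentiable ℝ g)
    (h₀ : f 0 ≤ g 0) (hderiv : ∀ x, 0 < x → deriv f x ≤ deriv g x) {x : ℝ} (hx : 0 ≤ x) :
    f x ≤ g x := by
  have hmono : MonotoneOn (g - f) (Ici 0) := by
    refine monotoneOn_of_deriv_nonneg (convex_Ici 0) (hg.sub hf).continuous.continuousOn
      (hg.sub hf).differentiableOn fun y hy => ?_
    rw [interior_Ici] at hy
    rw [deriv_sub (hg y) (hf y)]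
    exact sub_nonneg.2 (hderiv y hy)
  have := hmono self_mem_Ici hx hx
  simp only [Pi.sub_apply] at this
  linarith

lemma exp_neg_le_quadratic {t : ℝ} (ht : 0 ≤ t) : exp (-t) ≤ 1 - t + t ^ 2 / 2 := by
  refine le_of_deriv_le_of_nonneg (f := fun t => exp (-t)) (g := fun t => 1 - t + t ^ 2 / 2)
    (by fun_prop) (by fun_prop) (by simp) (fun x _ => ?_) ht
  simp (disch := fun_prop) [deriv_div_const]
  nlinarith [add_one_le_exp (-x)]

lemma cubic_le_exp_neg {t : ℝ} (ht : 0 ≤ t) : 1 - t + t ^ 2 / 2 - t ^ 3 / 6 ≤ exp (-t) := by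
  refine le_of_deriv_le_of_nonneg (f := fun t => 1 - t + t ^ 2 / 2 - t ^ 3 / 6)
    (g := fun t => exp (-t)) (by fun_prop) (by fun_prop) (by simp) (fun x hx => ?_) ht
  simp (disch := fun_prop) [deriv_div_const]
  nlinarith [exp_neg_le_quadratic hx.le]

lemma cos_le_quartic {x : ℝ} (hx : 0 ≤ x) : cos x ≤ 1 - x ^ 2 / 2 + x ^ 4 / 24 := by
  refine le_of_deriv_le_of_nonneg (f := cos) (g := fun x => 1 - x ^ 2 / 2 + x ^ 4 / 24)
    (by fun_prop) (by fun_prop) (by simp) (fun y hy => ?_) hx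
  simp (disch := fun_prop) [deriv_div_const]
  nlinarith [sin_ge_sub_cube hy.le]

lemma sin_le_quintic {x : ℝ} (hx : 0 ≤ x) : sin x ≤ x - x ^ 3 / 6 + x ^ 5 / 120 := by
  refine le_of_deriv_le_of_nonneg (f := sin) (g := fun x => x - x ^ 3 / 6 + x ^ 5 / 120)
    (by fun_prop) (by fun_prop) (by simp) (fun y hy => ?_) hx
  simp (disch := fun_prop) [deriv_div_const]
  nlinarith [cos_le_quartic hy.le]

lemma exp_neg_pi_sq_div_six_ge : 0.1764 ≤ exp (-(π ^ 2 / 6)) := by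
  have ht₁ : 0.822 ≤ π ^ 2 / 12 := by nlinarith [pi_gt_d6]
  have ht₂ : π ^ 2 / 12 ≤ 0.8225 := by nlinarith [pi_lt_d6, pi_pos]
  have hhalf : 0.42 ≤ exp (-(π ^ 2 / 12)) := by
    nlinarith [cubic_le_exp_neg (t := π ^ 2 / 12) (by positivity)]
  have hsq : exp (-(π ^ 2 / 6)) = exp (-(π ^ 2 / 12)) ^ 2 := by
    rw [← exp_nat_mul]; ring_nf
  rw [hsq]
  nlinarith

/-- Taylor polynomials suffice for `x² ≤ 36/5`; beyond that, `sin x ≤ π - x` is small enough. -/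
lemma sin_le_mul_exp_neg {x : ℝ} (hx₀ : 0 ≤ x) (hxπ : x ≤ π) :
    sin x ≤ x * exp (-(x ^ 2 / 6)) := by
  rcases le_or_gt (x ^ 2) (36 / 5) with hsmall | hlarge
  · have hexp := mul_le_mul_of_nonneg_left (cubic_le_exp_neg (t := x ^ 2 / 6) (by positivity)) hx₀
    nlinarith [sin_le_quintic hx₀, pow_nonneg hx₀ 5, pow_nonneg hx₀ 3]
  · have hx : 2.683 ≤ x := by nlinarith
    have hπ := pi_lt_d6
    have hsin : sin x ≤ π - x := by
      rw [← sin_pi_sub]; exact sin_le (by linarith)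
    have hexp : exp (-(π ^ 2 / 6)) ≤ exp (-(x ^ 2 / 6)) := exp_le_exp.2 (by nlinarith)
    nlinarith [exp_neg_pi_sq_div_six_ge]

/-- The characteristic function of the triangular density `(1 - |x|)₊`. At `s = 0` it takes the
junk value `0` instead of its limit `1`, which is invisible to integrals. -/
noncomputable def triangleCharFun (s : ℝ) : ℝ := 2 * (1 - cos s) / s ^ 2

lemma triangleCharFun_eq (s : ℝ) : triangleCharFun s = (sin (s / 2) / (s / 2)) ^ 2 := by
  have hcos : cos s = 1 - 2 * sin (s / 2) ^ 2 := by
    have h := cos_two_mul (s / 2)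
    rw [mul_div_cancel₀ s two_ne_zero] at h
    linarith [sin_sq_add_cos_sq (s / 2)]
  rw [triangleCharFun, hcos, div_pow]
  ring

lemma triangleCharFun_nonneg (s : ℝ) : 0 ≤ triangleCharFun s := by
  rw [triangleCharFun_eq]; positivity

lemma triangleCharFun_le_one (s : ℝ) : triangleCharFun s ≤ 1 := by
  rw [triangleCharFun_eq, div_pow]
  exact div_le_one_of_le₀ sin_sq_le_sq (sq_nonneg _)

lemma triangleCharFun_le_four_div_sq (s : ℝ) : triangleCharFun s ≤ 4 / s ^ 2 := by
  calc triangleCharFun s = sin (s / 2) ^ 2 / (s / 2) ^ 2 := by rw [triangleCharFun_eq, div_pow]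
    _ ≤ 1 / (s / 2) ^ 2 := by gcongr; exact sin_sq_le_one _
    _ = 4 / s ^ 2 := by ring

lemma triangleCharFun_le_exp {s : ℝ} (hs₀ : 0 < s) (hs : s ≤ 2 * π) :
    triangleCharFun s ≤ exp (-(s ^ 2 / 12)) := by
  have hsinc : sin (s / 2) / (s / 2) ≤ exp (-((s / 2) ^ 2 / 6)) := by
    rw [div_le_iff₀' (by positivity)]
    exact sin_le_mul_exp_neg (by positivity) (by linarith)
  have hsin : 0 ≤ sin (s / 2) := sin_nonneg_of_nonneg_of_le_pi (by positivity) (by linarith)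
  calc triangleCharFun s = (sin (s / 2) / (s / 2)) ^ 2 := triangleCharFun_eq s
    _ ≤ exp (-((s / 2) ^ 2 / 6)) ^ 2 := by gcongr
    _ = exp (-(s ^ 2 / 12)) := by rw [← exp_nat_mul]; ring_nf

@[fun_prop]
lemma measurable_triangleCharFun : Measurable triangleCharFun := by
  unfold triangleCharFun; fun_prop

lemma integrableOn_triangleCharFun_pow (n : ℕ) {t : Set ℝ} (ht : volume t ≠ ⊤) :
    IntegrableOn (fun s => triangleCharFun s ^ n) t := by
  refine (integrableOn_const ht (C := (1 : ℝ))).mono'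
    (by fun_prop : Measurable _).aestronglyMeasurable (ae_of_all _ fun s => ?_)
  rw [norm_of_nonneg (pow_nonneg (triangleCharFun_nonneg s) n)]
  exact pow_le_one₀ (triangleCharFun_nonneg s) (triangleCharFun_le_one s)

lemma setIntegral_Ioc_triangleCharFun_pow_le {n : ℕ} (hn : 0 < n) :
    ∫ s in Ioc 0 (2 * π), triangleCharFun s ^ n ≤ √(3 * π / n) := by
  have hgauss : Integrable fun s : ℝ => exp (-(n / 12) * s ^ 2) :=
    integrable_exp_neg_mul_sq (by positivity)
  calc ∫ s in Ioc 0 (2 * π), triangleCharFun s ^ n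
      ≤ ∫ s in Ioc 0 (2 * π), exp (-(n / 12) * s ^ 2) := by
        refine setIntegral_mono_on (integrableOn_triangleCharFun_pow n measure_Ioc_lt_top.ne)
          hgauss.integrableOn measurableSet_Ioc fun s hs => ?_
        calc triangleCharFun s ^ n ≤ exp (-(s ^ 2 / 12)) ^ n :=
              pow_le_pow_left₀ (triangleCharFun_nonneg s) (triangleCharFun_le_exp hs.1 hs.2) n
          _ = exp (-(n / 12) * s ^ 2) := by rw [← exp_nat_mul]; ring_nf
    _ ≤ ∫ s in Ioi 0, exp (-(n / 12) * s ^ 2) :=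
        setIntegral_mono_set hgauss.integrableOn (ae_of_all _ fun s => (exp_pos _).le)
          Ioc_subset_Ioi_self.eventuallyLE
    _ = √(3 * π / n) := by
        rw [integral_gaussian_Ioi, show π / (n / 12) = 2 ^ 2 * (3 * π / n) by ring,
          sqrt_mul (by positivity), sqrt_sq zero_le_two]
        ring

lemma triangleCharFun_pow_le_rpow (n : ℕ) {s : ℝ} (hs : 0 < s) :
    triangleCharFun s ^ n ≤ 4 ^ n * s ^ (-(2 * n : ℝ)) := by
  calc triangleCharFun s ^ n ≤ (4 / s ^ 2) ^ n :=
        pow_le_pow_left₀ (triangleCharFun_nonneg s) (triangleCharFun_le_four_div_sq s) n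
    _ = 4 ^ n * s ^ (-(2 * n : ℝ)) := by
        rw [rpow_neg hs.le, show (2 * n : ℝ) = (2 * n : ℕ) by push_cast; ring, rpow_natCast,
          div_pow, ← pow_mul, div_eq_mul_inv]

lemma integrableOn_Ioi_rpow_neg_two_mul {n : ℕ} (hn : 0 < n) {a : ℝ} (ha : 0 < a) :
    IntegrableOn (fun s : ℝ => s ^ (-(2 * n : ℝ))) (Ioi a) := by
  have hn₁ : (1 : ℝ) ≤ n := mod_cast hn
  exact integrableOn_Ioi_rpow_of_lt (by linarith) ha

lemma integrableOn_Ioi_triangleCharFun_pow {n : ℕ} (hn : 0 < n) {a : ℝ} (ha : 0 < a) :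
    IntegrableOn (fun s => triangleCharFun s ^ n) (Ioi a) := by
  refine ((integrableOn_Ioi_rpow_neg_two_mul hn ha).const_mul (4 ^ n)).mono'
    (by fun_prop : Measurable _).aestronglyMeasurable ?_
  filter_upwards [ae_restrict_mem measurableSet_Ioi] with s hs
  rw [norm_of_nonneg (pow_nonneg (triangleCharFun_nonneg s) n)]
  exact triangleCharFun_pow_le_rpow n (ha.trans hs)

lemma setIntegral_Ioi_triangleCharFun_pow_le {n : ℕ} (hn : 0 < n) {a : ℝ} (ha : 0 < a) :
    ∫ s in Ioi a, triangleCharFun s ^ n ≤ 4 ^ n * a / ((2 * n - 1) * a ^ (2 * n)) := by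
  have hn₁ : (1 : ℝ) ≤ n := mod_cast hn
  calc ∫ s in Ioi a, triangleCharFun s ^ n ≤ ∫ s in Ioi a, 4 ^ n * s ^ (-(2 * n : ℝ)) :=
        setIntegral_mono_on (integrableOn_Ioi_triangleCharFun_pow hn ha)
          ((integrableOn_Ioi_rpow_neg_two_mul hn ha).const_mul _) measurableSet_Ioi
          fun s hs => triangleCharFun_pow_le_rpow n (ha.trans hs)
    _ = 4 ^ n * a / ((2 * n - 1) * a ^ (2 * n)) := by
        rw [integral_const_mul, integral_Ioi_rpow_of_lt (by linarith) ha,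
          rpow_add_one ha.ne', rpow_neg ha.le, show (2 * n : ℝ) = (2 * n : ℕ) by push_cast; ring,
          rpow_natCast]
        have hexp_ne : (-(2 * n : ℝ) + 1) ≠ 0 := by linarith
        have hden_ne : (2 * n - 1 : ℝ) ≠ 0 := by linarith
        push_cast
        field_simp
        ring

/-- For every integer `n ≥ 1`,
`(1/π) ∫₀^∞ (2(1 − cos s)/s²)ⁿ ds ≤ √(3/(πn)) + 2/((2n−1) π^{2n})`. -/
theorem integral_char_pow_bound (n : ℕ) (hn : 1 ≤ n) :
    (1 / Real.pi) * (∫ s in Set.Ioi (0 : ℝ), (2 * (1 - Real.cos s) / s ^ 2) ^ n) ≤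
      Real.sqrt (3 / (Real.pi * n)) + 2 / ((2 * (n : ℝ) - 1) * Real.pi ^ (2 * n)) := by
  have h2π : 0 < 2 * π := by positivity
  have hsplit : ∫ s in Ioi 0, triangleCharFun s ^ n = (∫ s in Ioc 0 (2 * π), triangleCharFun s ^ n)
      + ∫ s in Ioi (2 * π), triangleCharFun s ^ n := by
    rw [← setIntegral_union (Ioc_disjoint_Ioi le_rfl) measurableSet_Ioi
      (integrableOn_triangleCharFun_pow n measure_Ioc_lt_top.ne)
      (integrableOn_Ioi_triangleCharFun_pow hn h2π), Ioc_union_Ioi_eq_Ioi h2π.le]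
  change (1 / π) * ∫ s in Ioi 0, triangleCharFun s ^ n ≤ _
  calc (1 / π) * ∫ s in Ioi 0, triangleCharFun s ^ n
      ≤ (1 / π) * (√(3 * π / n) + 4 ^ n * (2 * π) / ((2 * n - 1) * (2 * π) ^ (2 * n))) := by
        rw [hsplit]
        gcongr
        · exact setIntegral_Ioc_triangleCharFun_pow_le hn
        · exact setIntegral_Ioi_triangleCharFun_pow_le hn h2π
    _ = √(3 / (π * n)) + 2 / ((2 * n - 1) * π ^ (2 * n)) := by
        rw [show 3 * π / n = π ^ 2 * (3 / (π * n)) by field_simp, sqrt_mul (by positivity),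
          sqrt_sq pi_pos.le, mul_pow, pow_mul (2 : ℝ)]
        have hn₁ : (1 : ℝ) ≤ n := mod_cast hn
        have hden_ne : (2 * n - 1 : ℝ) ≠ 0 := by linarith
        field_simp
        ring
end

section
/- Let F be a non-singular Borel probability distribution on ℝ. Then there exist a > 0, u ∈ ℝ, θ ∈ (0, 1], and a Borel probability distribution H₂ on ℝ such that F ∗ F = (1 − θ)·H₂ + θ·(H₁ ∗ δ_u), where H₁ is the probability distribution with triangular density κ_a and δ_u is the Dirac measure at u. -/
/-!
`F` dominates `c • volume.restrict A` for some `c > 0` and some set `A` of positive measure, so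
`F ∗ F` dominates `c² • (volume.restrict A ∗ volume.restrict A)`, whose density at `x` is
`volume (A ∩ (x - A))`. Near a Lebesgue density point `u` of `A` this density is at least `r` on
`[2u - r, 2u + r]`, while `κ_r ≤ 1 / r` vanishes outside `[-r, r]`. Hence
`F ∗ F ≥ ε • (H₁ ∗ δ_{2u})` for some `ε > 0`, and `H₂` is the normalised remainder.
-/

open MeasureTheory

/-- A distribution on ℝ is non-singular if it dominates a nonzero sub-probability
measure having a density with respect to Lebesgue measure. -/
def NonSingular (μ : Measure ℝ) : Prop :=
  ∃ f : ℝ → ENNReal, Measurable f ∧ volume.withDensity f ≠ 0 ∧ volume.withDensity f ≤ μ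

/-- Triangular density with parameter `a > 0`:
`κ_a(x) = (1/a)(1 − |x|/a)` for `|x| ≤ a` and `0` otherwise. -/
noncomputable def triangularDensity (a : ℝ) (x : ℝ) : ℝ :=
  if |x| ≤ a then (1 / a) * (1 - |x| / a) else 0

open Measure Metric Set
open scoped ENNReal Topology

section TriangularDensity

variable {a : ℝ}

lemma triangularDensity_eq_max (a : ℝ) :
    triangularDensity a = fun x => max (a⁻¹ * (1 - |x| / a)) 0 := by
  ext x
  unfold triangularDensity
  split_ifs with h
  · rw [one_div, max_eq_left]
    have : |x| / a ≤ 1 := div_le_one_of_le₀ h ((abs_nonneg x).trans h)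
    have : 0 ≤ 1 - |x| / a := by linarith
    have : 0 ≤ a := (abs_nonneg x).trans h
    positivity
  · rw [max_eq_right]
    rcases le_or_gt a 0 with ha | ha
    · exact mul_nonpos_of_nonpos_of_nonneg (inv_nonpos.2 ha)
        (by linarith [div_nonpos_of_nonneg_of_nonpos (abs_nonneg x) ha])
    · have : 1 < |x| / a := (one_lt_div ha).2 (not_le.1 h)
      exact mul_nonpos_of_nonneg_of_nonpos (by positivity) (by linarith)

lemma triangularDensity_nonneg (a x : ℝ) : 0 ≤ triangularDensity a x := by
  rw [triangularDensity_eq_max]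
  exact le_max_right _ _

lemma triangularDensity_le_inv (ha : 0 ≤ a) (x : ℝ) : triangularDensity a x ≤ a⁻¹ := by
  unfold triangularDensity
  split_ifs
  · rw [one_div]
    exact mul_le_of_le_one_right (by positivity) (sub_le_self _ (by positivity))
  · positivity

lemma triangularDensity_eq_zero_of_lt_abs {x : ℝ} (h : a < |x|) : triangularDensity a x = 0 :=
  if_neg h.not_ge

lemma continuous_triangularDensity (a : ℝ) : Continuous (triangularDensity a) := by
  rw [triangularDensity_eq_max a]
  fun_prop

lemma integral_triangularDensity (ha : 0 < a) : ∫ x, triangularDensity a x = 1 := by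
  have hzero : ∀ x ∉ Icc (-a) a, triangularDensity a x = 0 := fun x hx =>
    triangularDensity_eq_zero_of_lt_abs (by rwa [mem_Icc, ← abs_le, not_le] at hx)
  have hneg : ∫ x in -a..0, triangularDensity a x = ∫ x in -a..0, a⁻¹ * (1 + x / a) := by
    refine intervalIntegral.integral_congr fun x hx => ?_
    rw [uIcc_of_le (by linarith), mem_Icc] at hx
    rw [triangularDensity, if_pos (abs_le.2 ⟨hx.1, by linarith⟩), abs_of_nonpos hx.2]
    ring
  have hpos : ∫ x in 0..a, triangularDensity a x = ∫ x in 0..a, a⁻¹ * (1 - x / a) := by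
    refine intervalIntegral.integral_congr fun x hx => ?_
    rw [uIcc_of_le ha.le, mem_Icc] at hx
    rw [triangularDensity, if_pos (abs_le.2 ⟨by linarith, hx.2⟩), abs_of_nonneg hx.1, one_div]
  have hint : ∀ b c, IntervalIntegrable (triangularDensity a) volume b c := fun b c =>
    (continuous_triangularDensity a).intervalIntegrable b c
  rw [← setIntegral_eq_integral_of_forall_compl_eq_zero hzero, integral_Icc_eq_integral_Ioc,
    ← intervalIntegral.integral_of_le (by linarith),
    ← intervalIntegral.integral_add_adjacent_intervals (hint _ _) (hint _ _), hneg, hpos]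
  simp only [intervalIntegral.integral_const_mul, intervalIntegral.integral_add,
    intervalIntegral.integral_sub, intervalIntegral.integral_div, intervalIntegral.integral_const,
    integral_id, intervalIntegrable_const, intervalIntegral.intervalIntegrable_id,
    IntervalIntegrable.div_const, smul_eq_mul]
  field_simp
  ring

end TriangularDensity

lemma isProbabilityMeasure_withDensity_triangularDensity {a : ℝ} (ha : 0 < a) :
    IsProbabilityMeasure (volume.withDensity fun x => ENNReal.ofReal (triangularDensity a x)) := by
  have hint : Integrable (triangularDensity a) :=
    .of_integral_ne_zero (by rw [integral_triangularDensity ha]; exact one_ne_zero)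
  constructor
  rw [withDensity_apply _ MeasurableSet.univ, restrict_univ,
    ← ofReal_integral_eq_lintegral_ofReal hint (.of_forall (triangularDensity_nonneg a)),
    integral_triangularDensity ha, ENNReal.ofReal_one]

namespace MeasureTheory.Measure

theorem conv_mono {M : Type*} [AddMonoid M] [MeasurableSpace M] [MeasurableAdd₂ M]
    {μ₁ μ₂ ν₁ ν₂ : Measure M} [SFinite ν₁] [SFinite ν₂] (hμ : μ₁ ≤ μ₂) (hν : ν₁ ≤ ν₂) :
    μ₁ ∗ ν₁ ≤ μ₂ ∗ ν₂ :=
  map_mono (prod_mono hμ hν) measurable_add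

theorem withDensity_conv_dirac {G : Type*} [AddGroup G] [MeasurableSpace G] [MeasurableAdd₂ G]
    [MeasurableSub G] {μ : Measure G} [SFinite μ] [μ.IsAddRightInvariant] {f : G → ℝ≥0∞}
    (hf : Measurable f) (c : G) :
    μ.withDensity f ∗ dirac c = μ.withDensity fun x => f (x - c) := by
  refine ext_of_lintegral _ fun φ hφ => ?_
  rw [conv_dirac, lintegral_map hφ (measurable_add_const c),
    lintegral_withDensity_eq_lintegral_mul _ hf (g := fun x => φ (x + c)) (by fun_prop),
    lintegral_withDensity_eq_lintegral_mul _ (f := fun x => f (x - c))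
      (hf.comp (measurable_sub_const c)) hφ]
  simpa using (lintegral_add_right_eq_self (μ := μ) (fun x => f (x - c) * φ x) c)

theorem restrict_conv_restrict {G : Type*} [AddCommGroup G] [MeasurableSpace G]
    [MeasurableAdd₂ G] [MeasurableNeg G] {μ : Measure G} [SFinite μ] [μ.IsAddLeftInvariant]
    {s t : Set G} (hs : MeasurableSet s) (ht : MeasurableSet t) :
    μ.restrict s ∗ μ.restrict t = μ.withDensity fun x => μ (s ∩ {y | x - y ∈ t}) := by
  rw [← withDensity_indicator_one hs, ← withDensity_indicator_one ht,
    conv_withDensity_eq_lconvolution (measurable_one.indicator hs)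
      (measurable_one.indicator ht)]
  congr with x
  rw [lconvolution_def, ← lintegral_indicator_one (s := s ∩ {y | x - y ∈ t})
    (hs.inter (ht.preimage (by fun_prop)))]
  simp only [inter_indicator_one, Pi.mul_apply, neg_add_eq_sub]
  rfl

end MeasureTheory.Measure

lemma exists_smul_restrict_le_withDensity {α : Type*} [MeasurableSpace α] {μ : Measure α}
    {f : α → ℝ≥0∞} (hf : Measurable f) (h : μ.withDensity f ≠ 0) :
    ∃ c : ℝ≥0∞, c ≠ 0 ∧ ∃ A, MeasurableSet A ∧ 0 < μ A ∧ c • μ.restrict A ≤ μ.withDensity f := by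
  obtain ⟨n, hn⟩ : ∃ n : ℕ, μ {x | (n : ℝ≥0∞)⁻¹ ≤ f x} ≠ 0 := by
    by_contra! hn
    refine h ((withDensity_eq_zero_iff hf.aemeasurable).2 (ae_iff.2 ?_))
    refine measure_mono_null (fun x hx => ?_) (measure_iUnion_null hn)
    exact mem_iUnion.2 ((ENNReal.exists_inv_nat_lt hx).imp fun _ => le_of_lt)
  refine ⟨(n : ℝ≥0∞)⁻¹, ENNReal.inv_ne_zero.2 (ENNReal.natCast_ne_top n), _, hf measurableSet_Ici,
    pos_iff_ne_zero.2 hn, ?_⟩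
  rw [← withDensity_const, ← withDensity_indicator (hf measurableSet_Ici)]
  exact withDensity_mono (.of_forall (indicator_le fun x hx => hx))

theorem exists_eq_mixture_of_smul_le {α : Type*} [MeasurableSpace α] {P Q : Measure α}
    [IsProbabilityMeasure P] [IsProbabilityMeasure Q] {ε : ℝ≥0∞} (hε : ε ≠ 0) (h : ε • Q ≤ P) :
    ∃ θ ∈ Ioc (0 : ℝ) 1, ∃ H : Measure α, IsProbabilityMeasure H ∧
      P = ENNReal.ofReal (1 - θ) • H + ENNReal.ofReal θ • Q := by
  -- Capping `θ` at `1 / 2` keeps `1 - θ ≠ 0`, so that `H` can be normalised.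
  set t := min ε 2⁻¹
  have ht_half : t ≤ 2⁻¹ := min_le_right _ _
  have ht_top : t ≠ ⊤ := ne_top_of_le_ne_top (by simp) ht_half
  have ht_one : t < 1 := ht_half.trans_lt (ENNReal.inv_lt_one.2 ENNReal.one_lt_two)
  have h1t : 1 - t ≠ 0 := (tsub_pos_iff_lt.2 ht_one).ne'
  have htQ : t • Q ≤ P := (Measure.le_iff'.2 fun s => mul_le_mul_left (min_le_left _ _) _).trans h
  have : IsFiniteMeasure (t • Q) := ⟨by simp [ht_top.lt_top]⟩
  refine ⟨t.toReal, ⟨ENNReal.toReal_pos (by simp [t, hε]) ht_top, ?_⟩,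
    (1 - t)⁻¹ • (P - t • Q), ⟨?_⟩, ?_⟩
  · simpa using ENNReal.toReal_mono ENNReal.one_ne_top ht_one.le
  · rw [Measure.smul_apply, sub_apply MeasurableSet.univ htQ, Measure.smul_apply, measure_univ,
      measure_univ, smul_eq_mul, smul_eq_mul, mul_one, ENNReal.inv_mul_cancel h1t (by simp)]
  · rw [ENNReal.ofReal_sub _ ENNReal.toReal_nonneg, ENNReal.ofReal_one,
      ENNReal.ofReal_toReal ht_top, smul_smul, ENNReal.mul_inv_cancel h1t (by simp), one_smul,
      sub_add_cancel_of_le htQ]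

lemma exists_volume_closedBall_diff_lt {A : Set ℝ} (hA : MeasurableSet A) (hpos : 0 < volume A)
    {δ : ℝ≥0∞} (hδ : δ ≠ 0) :
    ∃ u, ∀ᶠ s in 𝓝[>] (0 : ℝ), volume (closedBall u s \ A) < δ * volume (closedBall u s) := by
  have : (ae (volume.restrict A)).NeBot :=
    ae_neBot.2 (by rw [Ne, restrict_eq_zero]; exact hpos.ne')
  obtain ⟨u, hu, huA⟩ := ((ae_restrict_of_ae
    (Besicovitch.ae_tendsto_measure_inter_div_of_measurableSet volume hA.compl)).and
    (ae_restrict_mem hA)).exists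
  rw [indicator_of_notMem (notMem_compl_iff.2 huA)] at hu
  refine ⟨u, ?_⟩
  filter_upwards [hu.eventually (gt_mem_nhds (pos_iff_ne_zero.2 hδ)), self_mem_nhdsWithin]
    with s hs (hs0 : 0 < s)
  rwa [ENNReal.div_lt_iff (.inl (by simp [hs0])) (.inl measure_closedBall_lt_top.ne), inter_comm,
    ← sdiff_eq] at hs

lemma exists_forall_mem_closedBall_le_volume_inter {A : Set ℝ} (hA : MeasurableSet A)
    (hpos : 0 < volume A) :
    ∃ v r, 0 < r ∧ ∀ x ∈ closedBall v r, ENNReal.ofReal r ≤ volume (A ∩ {y | x - y ∈ A}) := by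
  obtain ⟨u, hu⟩ := exists_volume_closedBall_diff_lt hA hpos (δ := 8⁻¹) (by simp)
  obtain ⟨s, hs, hs0 : 0 < s⟩ := (hu.and self_mem_nhdsWithin).exists
  obtain ⟨r, rfl⟩ : ∃ r, s = 2 * r := ⟨s / 2, by ring⟩
  have hr : 0 < r := by linarith
  set E := closedBall u (2 * r) \ A
  have hgap : volume E ≤ ENNReal.ofReal (r / 2) := by
    refine hs.le.trans_eq ?_
    rw [Real.volume_closedBall, show r / 2 = 8⁻¹ * (2 * (2 * r)) by ring,
      ENNReal.ofReal_mul (p := 8⁻¹) (by norm_num), ENNReal.ofReal_inv_of_pos (by norm_num),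
      ENNReal.ofReal_ofNat]
  refine ⟨2 * u, r, hr, fun x hx => ?_⟩
  -- For `|x - 2u| ≤ r` and `|y - u| ≤ r`, both `y` and `x - y` lie in `closedBall u (2r)`.
  have hcover : closedBall u r ⊆ (A ∩ {y | x - y ∈ A}) ∪ E ∪ {y | x - y ∈ E} := by
    intro y hy
    simp only [Real.closedBall_eq_Icc, mem_Icc] at hx hy
    have hys : y ∈ closedBall u (2 * r) := by
      rw [Real.closedBall_eq_Icc]; constructor <;> linarith
    have hxys : x - y ∈ closedBall u (2 * r) := by
      rw [Real.closedBall_eq_Icc]; constructor <;> linarith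
    by_cases h1 : y ∈ A
    · by_cases h2 : x - y ∈ A
      · exact .inl (.inl ⟨h1, h2⟩)
      · exact .inr ⟨hxys, h2⟩
    · exact .inl (.inr ⟨hys, h1⟩)
  have hreflect : volume {y | x - y ∈ E} = volume E :=
    (measurePreserving_sub_left volume x).measure_preimage
      (measurableSet_closedBall.diff hA).nullMeasurableSet
  refine ENNReal.le_of_add_le_add_right (a := ENNReal.ofReal r) ENNReal.ofReal_ne_top ?_
  calc ENNReal.ofReal r + ENNReal.ofReal r = volume (closedBall u r) := by
        rw [Real.volume_closedBall, ← ENNReal.ofReal_add hr.le hr.le, two_mul]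
    _ ≤ volume (A ∩ {y | x - y ∈ A}) + volume E + volume {y | x - y ∈ E} :=
        (measure_mono hcover).trans
          ((measure_union_le _ _).trans (by gcongr; exact measure_union_le _ _))
    _ ≤ volume (A ∩ {y | x - y ∈ A}) + (ENNReal.ofReal (r / 2) + ENNReal.ofReal (r / 2)) := by
        rw [hreflect, add_assoc]
        gcongr
    _ = volume (A ∩ {y | x - y ∈ A}) + ENNReal.ofReal r := by
        rw [← ENNReal.ofReal_add (by positivity) (by positivity), add_halves]

lemma exists_smul_restrict_closedBall_le_restrict_conv_restrict {A : Set ℝ}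
    (hA : MeasurableSet A) (hpos : 0 < volume A) :
    ∃ v r, 0 < r ∧
      ENNReal.ofReal r • volume.restrict (closedBall v r) ≤
        volume.restrict A ∗ volume.restrict A := by
  obtain ⟨v, r, hr, h⟩ := exists_forall_mem_closedBall_le_volume_inter hA hpos
  refine ⟨v, r, hr, ?_⟩
  rw [restrict_conv_restrict hA hA, ← withDensity_const,
    ← withDensity_indicator measurableSet_closedBall]
  exact withDensity_mono (.of_forall (indicator_le h))

lemma smul_withDensity_triangularDensity_conv_dirac_le {a : ℝ} (ha : 0 < a) (v : ℝ) :
    ENNReal.ofReal a • ((volume.withDensity fun x => ENNReal.ofReal (triangularDensity a x)) ∗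
      dirac v) ≤ volume.restrict (closedBall v a) := by
  have hmeas : Measurable fun x => ENNReal.ofReal (triangularDensity a x) :=
    (continuous_triangularDensity a).measurable.ennreal_ofReal
  rw [withDensity_conv_dirac hmeas, ← withDensity_smul _
      (f := fun x => ENNReal.ofReal (triangularDensity a (x - v)))
      (hmeas.comp (measurable_sub_const v)),
    ← withDensity_indicator_one measurableSet_closedBall]
  refine withDensity_mono (.of_forall fun x => ?_)
  by_cases hx : x ∈ closedBall v a
  · rw [indicator_of_mem hx, Pi.smul_apply, smul_eq_mul, ← ENNReal.ofReal_mul ha.le]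
    exact ENNReal.ofReal_le_one.2 <| (mul_le_mul_of_nonneg_left
      (triangularDensity_le_inv ha.le _) ha.le).trans_eq (mul_inv_cancel₀ ha.ne')
  · have hx' : a < |x - v| := by rwa [mem_closedBall, Real.dist_eq, not_le] at hx
    simp [indicator_of_notMem hx, triangularDensity_eq_zero_of_lt_abs hx']

/-- If `F` is a non-singular probability distribution on ℝ, then there exist `a > 0`,
`u ∈ ℝ`, `θ ∈ (0, 1]` and a probability distribution `H₂` such that
`F ∗ F = (1 − θ) H₂ + θ (H₁ ∗ δ_u)`, where `H₁` has triangular density `κ_a`. -/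
theorem nonsingular_conv_decomposition
    (F : Measure ℝ) [IsProbabilityMeasure F] (hF : NonSingular F) :
    ∃ (a : ℝ), 0 < a ∧ ∃ (u θ : ℝ), θ ∈ Set.Ioc (0 : ℝ) 1 ∧
      ∃ (H₂ : Measure ℝ), IsProbabilityMeasure H₂ ∧
        Measure.conv F F =
          ENNReal.ofReal (1 - θ) • H₂ +
            ENNReal.ofReal θ •
              Measure.conv
                (volume.withDensity fun x => ENNReal.ofReal (triangularDensity a x))
                (Measure.dirac u) := by
  obtain ⟨f, hf, hf0, hfF⟩ := hF
  obtain ⟨c, hc, A, hA, hApos, hcA⟩ := exists_smul_restrict_le_withDensity hf hf0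
  obtain ⟨v, r, hr, hvr⟩ := exists_smul_restrict_closedBall_le_restrict_conv_restrict hA hApos
  have := isProbabilityMeasure_withDensity_triangularDensity hr
  refine ⟨r, hr, v, exists_eq_mixture_of_smul_le (ε := c * c * ENNReal.ofReal r * ENNReal.ofReal r)
    (by simp [hc, hr]) ?_⟩
  calc (c * c * ENNReal.ofReal r * ENNReal.ofReal r) •
        ((volume.withDensity fun x => ENNReal.ofReal (triangularDensity r x)) ∗ dirac v)
      ≤ (c * c * ENNReal.ofReal r) • volume.restrict (closedBall v r) := by
        rw [mul_smul]
        gcongr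
        exact smul_withDensity_triangularDensity_conv_dirac_le hr v
    _ ≤ (c * c) • (volume.restrict A ∗ volume.restrict A) := by
        rw [mul_smul]
        gcongr
    _ = (c • volume.restrict A) ∗ (c • volume.restrict A) := by
        rw [conv_smul_left, conv_smul_right, smul_smul]
    _ ≤ F ∗ F := conv_mono (hcA.trans hfF) (hcA.trans hfF)
end

section
/- Let H₁ and H₂ be Borel probability distributions on ℝ, u ∈ ℝ, θ ∈ (0, 1], and let F = (1 − θ)·H₂ + θ·(H₁ ∗ δ_u). Then for every integer m ≥ 1, every integer k₀ with 0 ≤ k₀ ≤ m, and every γ > 0, d_TV(F^{∗m}, F^{∗m} ∗ δ_γ) ≤ d_TV(H₁^{∗k₀}, H₁^{∗k₀} ∗ δ_γ) + P(I ≤ k₀ − 1), where I is a Binomial(m, θ) random variable. -/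
open MeasureTheory

/-- Total variation distance between two Borel measures on ℝ:
`d_TV(μ, ν) = sup_{A Borel} |μ(A) − ν(A)|`. -/
noncomputable def dTV (μ ν : Measure ℝ) : ℝ :=
  ⨆ A : {s : Set ℝ // MeasurableSet s}, |(μ A.1).toReal - (ν A.1).toReal|

/-- `k`-fold convolution power of a measure on ℝ, with `μ^{∗0} = δ₀`. -/
noncomputable def convPow (μ : Measure ℝ) : ℕ → Measure ℝ
  | 0 => Measure.dirac 0
  | n + 1 => Measure.conv (convPow μ n) μ

/-!
Expanding the convolution power binomially,
`F^{∗m} = ∑ₖ C(m,k) θᵏ (1-θ)^{m-k} (H₁ ∗ δ_u)^{∗k} ∗ H₂^{∗(m-k)}`, and total variation is jointly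
convex, so the distance between `F^{∗m}` and its shift is at most the binomial average of the
distances of the components from their shifts. A component with `k ≥ k₀` has the form
`H₁^{∗k₀} ∗ R` with `R` a probability measure, and convolving both arguments with `R` does not
increase total variation; each component with `k < k₀` contributes at most its weight.
-/

open scoped ENNReal
open Finset

namespace MeasureTheory

/-- Under `+` and convolution the s-finite measures form a commutative semiring, so `add_pow`
expands convolution powers of a mixture. -/
@[ext]
structure SFiniteMeasure (M : Type*) [MeasurableSpace M] where
  toMeasure : Measure M
  [sFinite : SFinite toMeasure]

namespace SFiniteMeasure

attribute [instance] sFinite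

section Module

variable {M : Type*} [MeasurableSpace M]

instance : Zero (SFiniteMeasure M) := ⟨⟨0⟩⟩
instance : Add (SFiniteMeasure M) := ⟨fun x y => ⟨x.1 + y.1⟩⟩
noncomputable instance : SMul ℝ≥0∞ (SFiniteMeasure M) := ⟨fun c x => ⟨c • x.1⟩⟩
noncomputable instance : SMul ℕ (SFiniteMeasure M) := ⟨fun n x => ⟨(n : ℝ≥0∞) • x.1⟩⟩

@[simp] lemma toMeasure_zero : (0 : SFiniteMeasure M).toMeasure = 0 := rfl
@[simp] lemma toMeasure_add (x y : SFiniteMeasure M) :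
    (x + y).toMeasure = x.toMeasure + y.toMeasure := rfl
@[simp] lemma toMeasure_smul (c : ℝ≥0∞) (x : SFiniteMeasure M) :
    (c • x).toMeasure = c • x.toMeasure := rfl
@[simp] lemma toMeasure_nsmul (n : ℕ) (x : SFiniteMeasure M) :
    (n • x).toMeasure = (n : ℝ≥0∞) • x.toMeasure := rfl

end Module

section Mul

variable {M : Type*} [MeasurableSpace M] [AddMonoid M]

noncomputable instance : One (SFiniteMeasure M) := ⟨⟨Measure.dirac 0⟩⟩
noncomputable instance : Mul (SFiniteMeasure M) := ⟨fun x y => ⟨x.1 ∗ y.1⟩⟩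

@[simp] lemma toMeasure_mul (x y : SFiniteMeasure M) :
    (x * y).toMeasure = x.toMeasure ∗ y.toMeasure := rfl

end Mul

variable {M : Type*} [MeasurableSpace M] [AddCommMonoid M] [MeasurableAdd₂ M]

noncomputable instance : CommSemiring (SFiniteMeasure M) where
  nsmul := (· • ·)
  nsmul_zero x := by ext1; simp
  nsmul_succ n x := by ext1; simp [add_smul]
  add_assoc x y z := by ext1; exact add_assoc _ _ _
  zero_add x := by ext1; exact zero_add _
  add_zero x := by ext1; exact add_zero _
  add_comm x y := by ext1; exact add_comm _ _
  left_distrib x y z := by ext1; exact Measure.conv_add _ _ _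
  right_distrib x y z := by ext1; exact Measure.add_conv _ _ _
  zero_mul x := by ext1; exact Measure.zero_conv _
  mul_zero x := by ext1; exact Measure.conv_zero _
  mul_assoc x y z := by ext1; exact Measure.conv_assoc _ _ _
  one_mul x := by ext1; exact Measure.dirac_zero_conv _
  mul_one x := by ext1; exact Measure.conv_dirac_zero _
  mul_comm x y := by ext1; exact Measure.conv_comm _ _

noncomputable instance : MulAction ℝ≥0∞ (SFiniteMeasure M) where
  one_smul x := by ext1; exact one_smul _ _
  mul_smul a b x := by ext1; exact mul_smul a b _

instance : IsScalarTower ℝ≥0∞ (SFiniteMeasure M) (SFiniteMeasure M) :=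
  ⟨fun c x y => by ext1; exact Measure.conv_smul_left _ _ c⟩

instance : SMulCommClass ℝ≥0∞ (SFiniteMeasure M) (SFiniteMeasure M) :=
  ⟨fun c x y => by ext1; exact (Measure.conv_smul_right _ _ c).symm⟩

noncomputable def toMeasureAddHom : SFiniteMeasure M →+ Measure M where
  toFun := toMeasure
  map_zero' := rfl
  map_add' _ _ := rfl

@[simp] lemma toMeasure_sum {ι : Type*} (s : Finset ι) (f : ι → SFiniteMeasure M) :
    (∑ i ∈ s, f i).toMeasure = ∑ i ∈ s, (f i).toMeasure :=
  map_sum toMeasureAddHom f s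

end SFiniteMeasure
end MeasureTheory

section TotalVariation

instance : Nonempty {s : Set ℝ // MeasurableSet s} := ⟨⟨∅, MeasurableSet.empty⟩⟩

variable {μ ν : Measure ℝ}

lemma dTV_nonneg : 0 ≤ dTV μ ν :=
  Real.iSup_nonneg fun _ => abs_nonneg _

lemma dTV_comm : dTV μ ν = dTV ν μ := by
  simp only [dTV, abs_sub_comm]

lemma dTV_le {c : ℝ} (h : ∀ A, MeasurableSet A → |(μ A).toReal - (ν A).toReal| ≤ c) :
    dTV μ ν ≤ c :=
  ciSup_le fun A => h A.1 A.2

lemma abs_sub_le_dTV [IsFiniteMeasure μ] [IsFiniteMeasure ν] {A : Set ℝ} (hA : MeasurableSet A) :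
    |(μ A).toReal - (ν A).toReal| ≤ dTV μ ν := by
  refine le_ciSup (f := fun B : {s : Set ℝ // MeasurableSet s} => |(μ B.1).toReal - (ν B.1).toReal|)
    ⟨μ.real .univ + ν.real .univ, ?_⟩ ⟨A, hA⟩
  rintro _ ⟨B, rfl⟩
  exact abs_sub_le_of_nonneg_of_le measureReal_nonneg
    ((measureReal_mono (Set.subset_univ _)).trans (le_add_of_nonneg_right measureReal_nonneg))
    measureReal_nonneg
    ((measureReal_mono (Set.subset_univ _)).trans (le_add_of_nonneg_left measureReal_nonneg))

lemma dTV_le_one [IsProbabilityMeasure μ] [IsProbabilityMeasure ν] : dTV μ ν ≤ 1 :=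
  dTV_le fun _ _ => abs_sub_le_of_nonneg_of_le measureReal_nonneg measureReal_le_one
    measureReal_nonneg measureReal_le_one

lemma measure_le_add_dTV [IsFiniteMeasure μ] [IsFiniteMeasure ν] {A : Set ℝ}
    (hA : MeasurableSet A) : μ A ≤ ν A + ENNReal.ofReal (dTV μ ν) := by
  have h : (μ A).toReal ≤ (ν A).toReal + dTV μ ν := by
    linarith [le_abs_self ((μ A).toReal - (ν A).toReal), abs_sub_le_dTV (μ := μ) (ν := ν) hA]
  calc μ A = ENNReal.ofReal (μ A).toReal := (ENNReal.ofReal_toReal (measure_ne_top _ _)).symm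
    _ ≤ ENNReal.ofReal ((ν A).toReal + dTV μ ν) := ENNReal.ofReal_le_ofReal h
    _ = ν A + ENNReal.ofReal (dTV μ ν) := by
      rw [ENNReal.ofReal_add ENNReal.toReal_nonneg dTV_nonneg,
        ENNReal.ofReal_toReal (measure_ne_top _ _)]

lemma dTV_le_of_measure_le_add [IsFiniteMeasure μ] [IsFiniteMeasure ν] {c : ℝ} (hc : 0 ≤ c)
    (h₁ : ∀ A, MeasurableSet A → μ A ≤ ν A + ENNReal.ofReal c)
    (h₂ : ∀ A, MeasurableSet A → ν A ≤ μ A + ENNReal.ofReal c) :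
    dTV μ ν ≤ c := by
  have key : ∀ {ρ σ : Measure ℝ} [IsFiniteMeasure σ] {A : Set ℝ},
      ρ A ≤ σ A + ENNReal.ofReal c → (ρ A).toReal ≤ (σ A).toReal + c := fun h => by
    simpa [ENNReal.toReal_add, measure_ne_top, hc] using
      ENNReal.toReal_mono (by finiteness) h
  refine dTV_le fun A hA => abs_sub_le_iff.2 ⟨?_, ?_⟩
  · linarith [key (h₁ A hA)]
  · linarith [key (h₂ A hA)]

end TotalVariation

section Convolution

open Measure

lemma conv_apply_eq_lintegral (μ ν : Measure ℝ) [SFinite μ] [SFinite ν] {A : Set ℝ}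
    (hA : MeasurableSet A) : (μ ∗ ν) A = ∫⁻ y, μ ((· + y) ⁻¹' A) ∂ν := by
  rw [conv_comm, conv, map_apply (by fun_prop) hA, Measure.prod_apply (measurable_add hA)]
  simp only [Set.preimage, Set.mem_ofPred_eq, add_comm]

lemma conv_apply_le_add_dTV (μ ν ρ : Measure ℝ) [IsFiniteMeasure μ] [IsFiniteMeasure ν]
    [IsProbabilityMeasure ρ] {A : Set ℝ} (hA : MeasurableSet A) :
    (μ ∗ ρ) A ≤ (ν ∗ ρ) A + ENNReal.ofReal (dTV μ ν) := by
  rw [conv_apply_eq_lintegral μ ρ hA, conv_apply_eq_lintegral ν ρ hA]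
  calc ∫⁻ y, μ ((· + y) ⁻¹' A) ∂ρ
      ≤ ∫⁻ y, (ν ((· + y) ⁻¹' A) + ENNReal.ofReal (dTV μ ν)) ∂ρ :=
        lintegral_mono fun y => measure_le_add_dTV (hA.preimage (by fun_prop))
    _ = ∫⁻ y, ν ((· + y) ⁻¹' A) ∂ρ + ENNReal.ofReal (dTV μ ν) := by
        rw [lintegral_add_right _ measurable_const, lintegral_const, measure_univ, mul_one]

lemma dTV_conv_le (μ ν ρ : Measure ℝ) [IsFiniteMeasure μ] [IsFiniteMeasure ν]
    [IsProbabilityMeasure ρ] : dTV (μ ∗ ρ) (ν ∗ ρ) ≤ dTV μ ν :=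
  dTV_le_of_measure_le_add dTV_nonneg (fun _ hA => conv_apply_le_add_dTV μ ν ρ hA)
    (fun _ hA => dTV_comm (μ := μ) ▸ conv_apply_le_add_dTV ν μ ρ hA)

end Convolution

section ConvPow

open Measure SFiniteMeasure

lemma toMeasure_pow (μ : Measure ℝ) [SFinite μ] (n : ℕ) :
    ((⟨μ⟩ : SFiniteMeasure ℝ) ^ n).toMeasure = convPow μ n := by
  induction n with
  | zero => rfl
  | succ n ih => rw [pow_succ, toMeasure_mul, ih]; rfl

instance isProbabilityMeasure_convPow (μ : Measure ℝ) [IsProbabilityMeasure μ] (n : ℕ) :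
    IsProbabilityMeasure (convPow μ n) := by
  induction n with
  | zero => exact dirac.isProbabilityMeasure
  | succ n ih => exact probabilitymeasure_of_probabilitymeasures_conv _ _

lemma convPow_add (μ : Measure ℝ) [SFinite μ] (m n : ℕ) :
    convPow μ (m + n) = convPow μ m ∗ convPow μ n := by
  simp only [← toMeasure_pow, pow_add, toMeasure_mul]

lemma convPow_conv (μ ν : Measure ℝ) [SFinite μ] [SFinite ν] (n : ℕ) :
    convPow (μ ∗ ν) n = convPow μ n ∗ convPow ν n := by
  calc convPow (μ ∗ ν) n = (((⟨μ⟩ : SFiniteMeasure ℝ) * ⟨ν⟩) ^ n).toMeasure :=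
        (toMeasure_pow _ n).symm
    _ = convPow μ n ∗ convPow ν n := by rw [mul_pow, toMeasure_mul, toMeasure_pow, toMeasure_pow]

lemma convPow_smul_add_smul (a b : ℝ≥0∞) (μ ν : Measure ℝ) [SFinite μ] [SFinite ν] (m : ℕ) :
    convPow (a • μ + b • ν) m = ∑ k ∈ range (m + 1),
      ((m.choose k : ℝ≥0∞) * a ^ k * b ^ (m - k)) • (convPow μ k ∗ convPow ν (m - k)) := by
  calc convPow (a • μ + b • ν) m = ((a • (⟨μ⟩ : SFiniteMeasure ℝ) + b • ⟨ν⟩) ^ m).toMeasure :=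
        (toMeasure_pow _ m).symm
    _ = _ := by
      simp only [add_pow, ← nsmul_eq_mul', smul_pow, smul_mul_smul_comm, toMeasure_sum,
        toMeasure_nsmul, toMeasure_smul, toMeasure_mul, toMeasure_pow, smul_smul, mul_assoc]

lemma finsetSum_conv {ι : Type*} (s : Finset ι) (μ : ι → Measure ℝ) [∀ i, SFinite (μ i)]
    (ν : Measure ℝ) [SFinite ν] : (∑ i ∈ s, μ i) ∗ ν = ∑ i ∈ s, μ i ∗ ν := by
  have h := congrArg toMeasure (Finset.sum_mul s (fun i => (⟨μ i⟩ : SFiniteMeasure ℝ)) ⟨ν⟩)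
  simpa using h

end ConvPow

section Mixture

open Measure

lemma dTV_sum_smul_le {ι : Type*} (s : Finset ι) {w : ι → ℝ} (hw : ∀ i ∈ s, 0 ≤ w i)
    (μ ν : ι → Measure ℝ) [∀ i, IsFiniteMeasure (μ i)] [∀ i, IsFiniteMeasure (ν i)] :
    dTV (∑ i ∈ s, ENNReal.ofReal (w i) • μ i) (∑ i ∈ s, ENNReal.ofReal (w i) • ν i) ≤
      ∑ i ∈ s, w i * dTV (μ i) (ν i) := by
  refine dTV_le fun A hA => ?_
  have toReal_apply : ∀ (ρ : ι → Measure ℝ) [∀ i, IsFiniteMeasure (ρ i)],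
      ((∑ i ∈ s, ENNReal.ofReal (w i) • ρ i) A).toReal = ∑ i ∈ s, w i * (ρ i A).toReal := by
    intro ρ _
    simp only [finsetSum_apply, Measure.smul_apply, smul_eq_mul]
    rw [ENNReal.toReal_sum fun i _ => ENNReal.mul_ne_top ENNReal.ofReal_ne_top (measure_ne_top _ _)]
    refine sum_congr rfl fun i hi => ?_
    rw [ENNReal.toReal_mul, ENNReal.toReal_ofReal (hw i hi)]
  rw [toReal_apply μ, toReal_apply ν, ← sum_sub_distrib]
  refine (abs_sum_le_sum_abs _ _).trans (sum_le_sum fun i hi => ?_)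
  rw [← mul_sub, abs_mul, abs_of_nonneg (hw i hi)]
  exact mul_le_mul_of_nonneg_left (abs_sub_le_dTV hA) (hw i hi)

lemma sum_mul_le_add_sum_filter_not {ι : Type*} (s : Finset ι) (p : ι → Prop) [DecidablePred p]
    {w d : ι → ℝ} {D : ℝ} (hw : ∀ i ∈ s, 0 ≤ w i) (hs : ∑ i ∈ s, w i ≤ 1) (hD : 0 ≤ D)
    (hd : ∀ i ∈ s, d i ≤ 1) (hdD : ∀ i ∈ s, p i → d i ≤ D) :
    ∑ i ∈ s, w i * d i ≤ D + ∑ i ∈ s with ¬p i, w i := by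
  calc ∑ i ∈ s, w i * d i ≤ ∑ i ∈ s, (D * w i + if ¬p i then w i else 0) := by
        refine sum_le_sum fun i hi => ?_
        split_ifs with h
        · nlinarith [hw i hi, hdD i hi h]
        · nlinarith [hw i hi, hd i hi]
    _ ≤ D + ∑ i ∈ s with ¬p i, w i := by
        rw [sum_add_distrib, ← mul_sum, ← sum_filter]
        nlinarith

lemma dTV_conv_self_conv_le (σ ρ τ : Measure ℝ) [IsFiniteMeasure σ] [IsProbabilityMeasure ρ]
    [IsProbabilityMeasure τ] : dTV (σ ∗ ρ) ((σ ∗ ρ) ∗ τ) ≤ dTV σ (σ ∗ τ) := by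
  rw [conv_assoc, conv_comm ρ, ← conv_assoc]
  exact dTV_conv_le σ (σ ∗ τ) ρ

lemma dTV_convPow_conv_le (H ν ρ τ : Measure ℝ) [IsProbabilityMeasure H] [IsProbabilityMeasure ν]
    [IsProbabilityMeasure ρ] [IsProbabilityMeasure τ] {k₀ k : ℕ} (hk : k₀ ≤ k) :
    dTV (convPow (H ∗ ν) k ∗ ρ) ((convPow (H ∗ ν) k ∗ ρ) ∗ τ) ≤
      dTV (convPow H k₀) (convPow H k₀ ∗ τ) := by
  obtain ⟨j, rfl⟩ := exists_add_of_le hk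
  rw [convPow_conv, convPow_add, conv_assoc, conv_assoc]
  exact dTV_conv_self_conv_le _ _ τ

end Mixture

theorem tv_shift_convPow_mixture_general
    (H₁ H₂ : Measure ℝ) [IsProbabilityMeasure H₁] [IsProbabilityMeasure H₂]
    (u : ℝ) (θ : ℝ) (hθ : θ ∈ Set.Ioc (0 : ℝ) 1)
    (F : Measure ℝ)
    (hF : F = ENNReal.ofReal (1 - θ) • H₂ +
      ENNReal.ofReal θ • Measure.conv H₁ (Measure.dirac u))
    (m : ℕ) (k₀ : ℕ) (hk₀ : k₀ ≤ m) (γ : ℝ) :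
    dTV (convPow F m) (Measure.conv (convPow F m) (Measure.dirac γ)) ≤
      dTV (convPow H₁ k₀) (Measure.conv (convPow H₁ k₀) (Measure.dirac γ)) +
        ∑ k ∈ Finset.range k₀, (m.choose k : ℝ) * θ ^ k * (1 - θ) ^ (m - k) := by
  obtain ⟨hθ₀, hθ₁⟩ := hθ
  have hθ₁' : 0 ≤ 1 - θ := sub_nonneg.2 hθ₁
  set w : ℕ → ℝ := fun k => m.choose k * θ ^ k * (1 - θ) ^ (m - k)
  have hw : ∀ k, 0 ≤ w k := fun k => by positivity
  have hsum : ∑ k ∈ range (m + 1), w k = 1 := by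
    have h := (add_pow θ (1 - θ) m).symm
    rw [add_sub_cancel, one_pow] at h
    rw [← h]
    exact sum_congr rfl fun k _ => by ring
  have hexpand : convPow F m = ∑ k ∈ range (m + 1),
      ENNReal.ofReal (w k) • (convPow (H₁ ∗ Measure.dirac u) k ∗ convPow H₂ (m - k)) := by
    rw [hF, add_comm, convPow_smul_add_smul]
    refine sum_congr rfl fun k _ => ?_
    rw [ENNReal.ofReal_mul (by positivity), ENNReal.ofReal_mul (by positivity),
      ENNReal.ofReal_pow hθ₀.le, ENNReal.ofReal_pow hθ₁', ENNReal.ofReal_natCast]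
  have hfilter : {k ∈ range (m + 1) | ¬k₀ ≤ k} = range k₀ := by
    ext k; simp only [mem_filter, mem_range]; omega
  rw [hexpand, finsetSum_conv]
  simp only [Measure.conv_smul_left]
  calc _ ≤ ∑ k ∈ range (m + 1), w k * dTV (convPow (H₁ ∗ Measure.dirac u) k ∗ convPow H₂ (m - k))
          ((convPow (H₁ ∗ Measure.dirac u) k ∗ convPow H₂ (m - k)) ∗ Measure.dirac γ) :=
        dTV_sum_smul_le _ (fun k _ => hw k) _ _
    _ ≤ _ := by
        rw [← hfilter]
        exact sum_mul_le_add_sum_filter_not _ (k₀ ≤ ·) (fun k _ => hw k) hsum.le dTV_nonneg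
          (fun _ _ => dTV_le_one) (fun _ _ hk => dTV_convPow_conv_le _ _ _ _ hk)

/-- If `F = (1 − θ) H₂ + θ (H₁ ∗ δ_u)`, then for every `m ≥ 1`, `0 ≤ k₀ ≤ m` and
`γ > 0`, `d_TV(F^{∗m}, F^{∗m} ∗ δ_γ) ≤ d_TV(H₁^{∗k₀}, H₁^{∗k₀} ∗ δ_γ) + P(I ≤ k₀ − 1)`,
where `I ∼ Binomial(m, θ)`, i.e. `P(I ≤ k₀ − 1) = Σ_{k<k₀} C(m,k) θᵏ (1 − θ)^{m−k}`. -/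
theorem tv_shift_convPow_mixture
    (H₁ H₂ : Measure ℝ) [IsProbabilityMeasure H₁] [IsProbabilityMeasure H₂]
    (u : ℝ) (θ : ℝ) (hθ : θ ∈ Set.Ioc (0 : ℝ) 1)
    (F : Measure ℝ)
    (hF : F = ENNReal.ofReal (1 - θ) • H₂ +
      ENNReal.ofReal θ • Measure.conv H₁ (Measure.dirac u))
    (m : ℕ) (hm : 1 ≤ m) (k₀ : ℕ) (hk₀ : k₀ ≤ m) (γ : ℝ) (hγ : 0 < γ) :
    dTV (convPow F m) (Measure.conv (convPow F m) (Measure.dirac γ)) ≤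
      dTV (convPow H₁ k₀) (Measure.conv (convPow H₁ k₀) (Measure.dirac γ)) +
        ∑ k ∈ Finset.range k₀, (m.choose k : ℝ) * θ ^ k * (1 - θ) ^ (m - k) :=
  tv_shift_convPow_mixture_general H₁ H₂ u θ hθ F hF m k₀ hk₀ γ
end

section
/- Let η₁, η₂, … be i.i.d. real random variables with E η₁ = 0 and Var(η₁) = 1, let Sₙ = η₁ + … + ηₙ, Wₙ = Sₙ/√n, and Wₙ′ = Wₙ − η₁/√n. Let f : ℝ → ℝ be continuously differentiable with bounded derivative and f bounded. Then for every n ≥ 1, E[f′(Wₙ) − Wₙ f(Wₙ)] = E[f′(Wₙ′ + η₁/√n) − f′(Wₙ′)] − ∫₀¹ E[ (f′(Wₙ′ + u η₁/√n) − f′(Wₙ′)) · η₁² ] du. -/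
open MeasureTheory ProbabilityTheory Real

/-!
Since the summands are exchangeable, `E[W f(W)] = √n E[η₀ f(W)]`. As `W'` is independent of `η₀`
and `E η₀ = 0`, this is `√n E[η₀ (f(W' + η₀/√n) - f(W'))]`; Taylor's formula with integral
remainder and Fubini turn it into `∫₀¹ E[(f'(W' + u η₀/√n) - f'(W')) η₀²] du + E[f'(W') η₀²]`,
and independence together with `E η₀² = 1` reduces the last term to `E f'(W')`.
-/

namespace ProbabilityTheory

variable {Ω ι : Type*} [MeasurableSpace Ω] {P : Measure Ω}

lemma iIndepFun.identDistrib_comp_perm {β : Type*} [MeasurableSpace β] {X : ι → Ω → β}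
    {μ : Measure β} (hX : ∀ i, Measurable (X i)) (hindep : iIndepFun X P)
    (hlaw : ∀ i, P.map (X i) = μ) (σ : Equiv.Perm ι) :
    IdentDistrib (fun ω i ↦ X (σ i) ω) (fun ω i ↦ X i ω) P P where
  aemeasurable_fst := (measurable_pi_iff.2 fun i ↦ hX (σ i)).aemeasurable
  aemeasurable_snd := (measurable_pi_iff.2 hX).aemeasurable
  map_eq := by
    rw [(hindep.precomp σ.injective).map_fun_eq_infinitePi_map fun i ↦ hX (σ i),
      hindep.map_fun_eq_infinitePi_map hX]
    simp only [hlaw]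

variable [DecidableEq ι] {X : ι → Ω → ℝ} {μ : Measure ℝ} {s : Finset ι} {g : ℝ → ℝ}

lemma iIndepFun.integral_mul_comp_sum_eq (hX : ∀ i, Measurable (X i)) (hindep : iIndepFun X P)
    (hlaw : ∀ i, P.map (X i) = μ) (hg : Measurable g) {i j : ι} (hi : i ∈ s) (hj : j ∈ s) :
    ∫ ω, X i ω * g (∑ k ∈ s, X k ω) ∂P = ∫ ω, X j ω * g (∑ k ∈ s, X k ω) ∂P := by
  have hswap : {k | Equiv.swap i j k ≠ k} ⊆ s := fun k hk ↦ by
    by_contra hks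
    exact hk (Equiv.swap_apply_of_ne_of_ne (ne_of_mem_of_not_mem hi hks).symm
      (ne_of_mem_of_not_mem hj hks).symm)
  have hu : Measurable fun x : ι → ℝ ↦ x i * g (∑ k ∈ s, x k) := by fun_prop
  have h := ((hindep.identDistrib_comp_perm hX hlaw (Equiv.swap i j)).comp hu).integral_eq
  simp only [Function.comp_def, Equiv.swap_apply_left,
    fun ω ↦ (Equiv.swap i j).sum_comp s (fun k ↦ X k ω) hswap] at h
  exact h.symm

lemma iIndepFun.indepFun_sum_erase (hX : ∀ i, Measurable (X i)) (hindep : iIndepFun X P)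
    (s : Finset ι) (i : ι) : IndepFun (fun ω ↦ ∑ k ∈ s.erase i, X k ω) (X i) P := by
  simpa only [Finset.sum_fn] using
    hindep.indepFun_finsetSum_of_notMem hX (Finset.notMem_erase i s)

lemma iIndepFun.integral_sum_div_sqrt_mul_comp (hX : ∀ i, Measurable (X i))
    (hindep : iIndepFun X P) (hlaw : ∀ i, P.map (X i) = μ) (hint : ∀ i, Integrable (X i) P)
    (hg : Measurable g) {C : ℝ} (hgC : ∀ x, |g x| ≤ C) {i : ι} (hi : i ∈ s) :
    ∫ ω, (∑ k ∈ s, X k ω) / √s.card * g ((∑ k ∈ s, X k ω) / √s.card) ∂P =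
      √s.card * ∫ ω, X i ω * g ((∑ k ∈ s, X k ω) / √s.card) ∂P := by
  set c := √(s.card : ℝ)
  have hg' : Measurable fun x ↦ g (x / c) := hg.comp (measurable_id.div_const c)
  have hint_mul : ∀ k, Integrable (fun ω ↦ X k ω * g ((∑ l ∈ s, X l ω) / c)) P := fun k ↦
    (hint k).mul_bdd (hg'.comp (s.measurable_sum fun l _ ↦ hX l)).aestronglyMeasurable
      (.of_forall fun ω ↦ hgC _)
  have hc2 : (s.card : ℝ) = c * c := (Real.mul_self_sqrt s.card.cast_nonneg).symm
  simp_rw [div_mul_eq_mul_div, Finset.sum_mul, integral_div]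
  rw [integral_finsetSum s fun k _ ↦ hint_mul k,
    Finset.sum_congr rfl fun k hk ↦ hindep.integral_mul_comp_sum_eq hX hlaw hg' hk hi,
    Finset.sum_const, nsmul_eq_mul, hc2]
  field_simp

end ProbabilityTheory

lemma sub_sub_deriv_mul_eq_integral {f : ℝ → ℝ} (hf : Differentiable ℝ f)
    (hf' : Continuous (deriv f)) (v t : ℝ) :
    f (v + t) - f v - deriv f v * t =
      ∫ u in (0 : ℝ)..1, (deriv f (v + u * t) - deriv f v) * t := by
  have hderiv : ∀ u ∈ Set.uIcc (0 : ℝ) 1,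
      HasDerivAt (fun u ↦ f (v + u * t)) (deriv f (v + u * t) * t) u := fun u _ ↦ by
    have hline : HasDerivAt (fun u ↦ v + u * t) t u := by
      simpa using ((hasDerivAt_id u).mul_const t).const_add v
    exact (hf _).hasDerivAt.comp u hline
  have hint : IntervalIntegrable (fun u ↦ deriv f (v + u * t) * t) volume 0 1 :=
    (by fun_prop : Continuous fun u ↦ deriv f (v + u * t) * t).intervalIntegrable 0 1
  simp_rw [sub_mul]
  rw [intervalIntegral.integral_sub hint intervalIntegrable_const,
    intervalIntegral.integral_eq_sub_of_hasDerivAt hderiv hint]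
  simp

section LeaveOneOut

variable {Ω : Type*} [MeasurableSpace Ω] {P : Measure Ω} {V ξ : Ω → ℝ} {f : ℝ → ℝ}
  {C C' c : ℝ}

lemma intervalIntegral_integral_deriv_sub_mul_sq [SFinite P] (hV : Measurable V)
    (hξ : Measurable ξ) (hξL2 : MemLp ξ 2 P) (hf : Differentiable ℝ f)
    (hf' : Continuous (deriv f)) (hf'C : ∀ x, |deriv f x| ≤ C') (hc : c ≠ 0) :
    ∫ u in (0 : ℝ)..1, ∫ ω, (deriv f (V ω + u * ξ ω / c) - deriv f (V ω)) * ξ ω ^ 2 ∂P =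
      ∫ ω, c * (ξ ω * (f (V ω + ξ ω / c) - f (V ω))) - deriv f (V ω) * ξ ω ^ 2 ∂P := by
  set F : ℝ → Ω → ℝ := fun u ω ↦ (deriv f (V ω + u * ξ ω / c) - deriv f (V ω)) * ξ ω ^ 2
  have hF_int : Integrable (Function.uncurry F) ((volume.restrict (Set.uIoc 0 1)).prod P) := by
    have : IsFiniteMeasure (volume.restrict (Set.uIoc (0 : ℝ) 1)) :=
      isFiniteMeasure_restrict.2 (by simp)
    refine Integrable.mono' ((integrable_const (1 : ℝ)).mul_prod
      (hξL2.integrable_sq.const_mul (2 * C'))) ?_ (.of_forall fun ⟨u, ω⟩ ↦ ?_)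
    · have := hf'.measurable
      fun_prop
    · simp only [Function.uncurry_apply_pair, F, norm_mul, Real.norm_eq_abs, abs_pow, sq_abs,
        one_mul]
      gcongr
      linarith [abs_sub (deriv f (V ω + u * ξ ω / c)) (deriv f (V ω)),
        hf'C (V ω + u * ξ ω / c), hf'C (V ω)]
  rw [intervalIntegral_integral_swap hF_int]
  refine integral_congr_ae (.of_forall fun ω ↦ ?_)
  dsimp only
  have h := congrArg (c * ξ ω * ·) (sub_sub_deriv_mul_eq_integral hf hf' (V ω) (ξ ω / c))
  simp only [← intervalIntegral.integral_const_mul] at h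
  rw [intervalIntegral.integral_congr fun u _ ↦ ?_, ← h]
  · field_simp
  · simp only [F]
    field_simp

theorem ProbabilityTheory.IndepFun.mul_integral_mul_comp_add_div_eq [IsProbabilityMeasure P]
    (hV : Measurable V) (hξ : Measurable ξ) (hindep : IndepFun V ξ P) (hξL2 : MemLp ξ 2 P)
    (hmean : ∫ ω, ξ ω ∂P = 0) (hvar : variance ξ P = 1) (hf : Differentiable ℝ f)
    (hf' : Continuous (deriv f)) (hfC : ∀ x, |f x| ≤ C) (hf'C : ∀ x, |deriv f x| ≤ C')
    (hc : c ≠ 0) :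
    c * ∫ ω, ξ ω * f (V ω + ξ ω / c) ∂P =
      (∫ u in (0 : ℝ)..1, ∫ ω, (deriv f (V ω + u * ξ ω / c) - deriv f (V ω)) * ξ ω ^ 2 ∂P) +
        ∫ ω, deriv f (V ω) ∂P := by
  have hsq : ∫ ω, ξ ω ^ 2 ∂P = 1 := by
    simpa [hvar, hmean] using (variance_eq_sub hξL2).symm
  have hf_cont := hf.continuous
  have hξ_int := hξL2.integrable one_le_two
  have hzero : ∫ ω, ξ ω * f (V ω) ∂P = 0 := by
    rw [hindep.symm.integral_fun_comp_mul_comp (f := fun x ↦ x) hξ.aemeasurable hV.aemeasurable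
      aestronglyMeasurable_id hf_cont.aestronglyMeasurable]
    simp [hmean]
  have hfactor : ∫ ω, deriv f (V ω) * ξ ω ^ 2 ∂P = ∫ ω, deriv f (V ω) ∂P := by
    rw [hindep.integral_fun_comp_mul_comp (g := (· ^ 2)) hV.aemeasurable hξ.aemeasurable
      hf'.aestronglyMeasurable (by fun_prop), hsq, mul_one]
  have hint_shift : Integrable (fun ω ↦ ξ ω * f (V ω + ξ ω / c)) P :=
    hξ_int.mul_bdd (by fun_prop) (.of_forall fun ω ↦ hfC _)
  have hint_zero : Integrable (fun ω ↦ ξ ω * f (V ω)) P :=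
    hξ_int.mul_bdd (by fun_prop) (.of_forall fun ω ↦ hfC _)
  have hint_sq : Integrable (fun ω ↦ deriv f (V ω) * ξ ω ^ 2) P :=
    hξL2.integrable_sq.bdd_mul (by fun_prop) (.of_forall fun ω ↦ hf'C _)
  have hint_diff : Integrable (fun ω ↦ c * (ξ ω * (f (V ω + ξ ω / c) - f (V ω)))) P := by
    simpa only [Pi.sub_apply, mul_sub] using (hint_shift.sub hint_zero).const_mul c
  rw [intervalIntegral_integral_deriv_sub_mul_sq hV hξ hξL2 hf hf' hf'C hc,
    integral_sub hint_diff hint_sq, integral_const_mul]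
  simp_rw [mul_sub]
  rw [integral_sub hint_shift hint_zero, hzero, hfactor]
  ring

end LeaveOneOut

/-- Stein-type identity: for i.i.d. `η i` with mean `0` and variance `1`,
`W = S n / √n`, `W' = W − η 1/√n`, and `f` continuously differentiable, bounded with
bounded derivative, for every `n ≥ 1`,
`E[f′(W) − W f(W)] = E[f′(W' + η 1/√n) − f′(W')]
  − ∫₀¹ E[(f′(W' + u η 1/√n) − f′(W')) η 1²] du`. -/
theorem stein_identity_iid
    {Ω : Type*} [MeasurableSpace Ω] (P : Measure Ω) [IsProbabilityMeasure P]
    (η : ℕ → Ω → ℝ) (hmeas : ∀ i, Measurable (η i))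
    (hindep : iIndepFun η P)
    (hident : ∀ i, Measure.map (η i) P = Measure.map (η 0) P)
    (hL2 : MemLp (η 0) 2 P)
    (hmean : ∫ ω, η 0 ω ∂P = 0) (hvar : variance (η 0) P = 1)
    (n : ℕ) (hn : 1 ≤ n)
    (S : ℕ → Ω → ℝ) (hS : ∀ k ω, S k ω = ∑ i ∈ Finset.range k, η i ω)
    (W : Ω → ℝ) (hW : ∀ ω, W ω = S n ω / Real.sqrt n)
    (W' : Ω → ℝ) (hW' : ∀ ω, W' ω = W ω - η 0 ω / Real.sqrt n)
    (f : ℝ → ℝ) (hf : Differentiable ℝ f) (hf' : Continuous (deriv f))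
    (hfb : ∃ C : ℝ, ∀ x, |f x| ≤ C) (hf'b : ∃ C : ℝ, ∀ x, |deriv f x| ≤ C) :
    ∫ ω, (deriv f (W ω) - W ω * f (W ω)) ∂P =
      (∫ ω, (deriv f (W' ω + η 0 ω / Real.sqrt n) - deriv f (W' ω)) ∂P) -
        ∫ u in (0 : ℝ)..1,
          ∫ ω, (deriv f (W' ω + u * η 0 ω / Real.sqrt n) - deriv f (W' ω)) *
            (η 0 ω) ^ 2 ∂P := by
  obtain ⟨C, hfC⟩ := hfb
  obtain ⟨C', hf'C⟩ := hf'b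
  have hf_meas := hf.continuous.measurable
  set c := √(n : ℝ)
  have h0 : 0 ∈ Finset.range n := Finset.mem_range.2 hn
  have hW_eq : W = fun ω ↦ (∑ i ∈ Finset.range n, η i ω) / c := funext fun ω ↦ by rw [hW, hS]
  have hW'_eq : W' = fun ω ↦ (∑ i ∈ (Finset.range n).erase 0, η i ω) / c :=
    funext fun ω ↦ by rw [hW', hW, hS, Finset.sum_erase_eq_sub h0, sub_div]
  have hW_split : ∀ ω, W ω = W' ω + η 0 ω / c := fun ω ↦ by rw [hW' ω]; ring
  have hW'_indep : IndepFun W' (η 0) P := hW'_eq ▸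
    (hindep.indepFun_sum_erase hmeas _ 0).comp (measurable_id.div_const c) measurable_id
  have hη_int : ∀ i, Integrable (η i) P := fun i ↦
    (IdentDistrib.integrable_iff ⟨(hmeas i).aemeasurable, (hmeas 0).aemeasurable, hident i⟩).2
      (hL2.integrable one_le_two)
  have hWf : ∫ ω, W ω * f (W ω) ∂P = c * ∫ ω, η 0 ω * f (W' ω + η 0 ω / c) ∂P := by
    simp_rw [← hW_split, hW_eq]
    simpa only [Finset.card_range] using
      hindep.integral_sum_div_sqrt_mul_comp hmeas hident hη_int hf_meas hfC h0
  have hW'_meas : Measurable W' := by rw [hW'_eq]; fun_prop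
  have hint_f' : ∀ {Y : Ω → ℝ}, Measurable Y → Integrable (fun ω ↦ deriv f (Y ω)) P :=
    fun hY ↦ (integrable_const C').mono' (by fun_prop) (.of_forall fun ω ↦ hf'C _)
  have hint_Wf : Integrable (fun ω ↦ W ω * f (W ω)) P := by
    rw [hW_eq]
    exact ((integrable_finsetSum _ fun i _ ↦ hη_int i).div_const c).mul_bdd
      (hf_meas.comp (by fun_prop)).aestronglyMeasurable (.of_forall fun ω ↦ hfC _)
  calc ∫ ω, (deriv f (W ω) - W ω * f (W ω)) ∂P
      = ∫ ω, deriv f (W' ω + η 0 ω / c) ∂P - c * ∫ ω, η 0 ω * f (W' ω + η 0 ω / c) ∂P := by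
        rw [integral_sub (hint_f' (hW_eq ▸ by fun_prop)) hint_Wf, hWf]
        simp_rw [hW_split]
    _ = _ := by
        rw [hW'_indep.mul_integral_mul_comp_add_div_eq hW'_meas (hmeas 0) hL2 hmean hvar hf hf'
          hfC hf'C (Real.sqrt_pos.2 (by exact_mod_cast hn)).ne',
          integral_sub (hint_f' (by fun_prop)) (hint_f' hW'_meas)]
        ring
end
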